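/- Let v and w be words over {0,1,•} of lengths M−1 and N−1 respectively. Then Δ ↦ dec(Δ) is a bijection from the set of M,N-invariant sets fitting (1v, 1w) onto the set of M,N-invariant sets fitting (v•, w•); moreover, for Δ fitting (1v, 1w), area(dec(Δ)) = area(Δ) and pdinv(dec(Δ)) = pdinv(Δ). -/
import Mathlib


/-- The alphabet {0, 1, •}. -/
inductive Symb where
  | zero : Symb
  | one : Symb
  | bullet : Symb
deriving DecidableEq

/-- An `M,N`-invariant set: a subset of ℕ with finite complement,
closed under adding `M` and adding `N`. -/
def Invariant (M N : ℕ) (Δ : Set ℕ) : Prop :=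
  {n : ℕ | n ∉ Δ}.Finite ∧ ∀ i ∈ Δ, i + M ∈ Δ ∧ i + N ∈ Δ

/-- `c` is a north step of `Δ`: `c ∉ Δ` and `c + N ∈ Δ`. -/
def NorthStep (N : ℕ) (Δ : Set ℕ) (c : ℕ) : Prop := c ∉ Δ ∧ c + N ∈ Δ

/-- `c` is an east step of `Δ`: `c ∉ Δ` and `c + M ∈ Δ`. -/
def EastStep (M : ℕ) (Δ : Set ℕ) (c : ℕ) : Prop := c ∉ Δ ∧ c + M ∈ Δ

/-- `area Δ` is the number of `c ≥ M + N` with `c ∉ Δ`. -/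
noncomputable def area (M N : ℕ) (Δ : Set ℕ) : ℕ := {c : ℕ | M + N ≤ c ∧ c ∉ Δ}.ncard

/-- `pdinv Δ` is the number of pairs `(c, d)` with `c < d`, `M ≤ d < c + M`,
`c` a north step of `Δ`, and `d ∉ Δ`. -/
noncomputable def pdinv (M N : ℕ) (Δ : Set ℕ) : ℕ :=
  {p : ℕ × ℕ | p.1 < p.2 ∧ M ≤ p.2 ∧ p.2 < p.1 + M ∧ NorthStep N Δ p.1 ∧ p.2 ∉ Δ}.ncard

/-- `Δ` fits the pair of words `(v, w)`, where `v` has length `M` and `w` has length `N`. -/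
def Fits (M N : ℕ) (Δ : Set ℕ) (v w : List Symb) : Prop :=
  v.length = M ∧ w.length = N ∧
  (∀ (i : ℕ) (hi : i < v.length),
    (v.get ⟨i, hi⟩ = Symb.bullet ↔ i ∈ Δ) ∧
    (v.get ⟨i, hi⟩ = Symb.one ↔ NorthStep N Δ i) ∧
    (v.get ⟨i, hi⟩ = Symb.zero ↔ (i ∉ Δ ∧ i + N ∉ Δ))) ∧
  (∀ (i : ℕ) (hi : i < w.length),
    (w.get ⟨i, hi⟩ = Symb.bullet ↔ i ∈ Δ) ∧
    (w.get ⟨i, hi⟩ = Symb.one ↔ EastStep M Δ i) ∧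
    (w.get ⟨i, hi⟩ = Symb.zero ↔ (i ∉ Δ ∧ i + M ∉ Δ)))

/-- Decrement: `dec Δ = {i : ℕ | i + 1 ∈ Δ}`. -/
def dec (Δ : Set ℕ) : Set ℕ := {i : ℕ | i + 1 ∈ Δ}
private lemma mem_dec {Δ : Set ℕ} {i : ℕ} : i ∈ dec Δ ↔ i + 1 ∈ Δ := Iff.rfl

private lemma mem_dec_add {Δ : Set ℕ} {i k : ℕ} : i + k ∈ dec Δ ↔ i + 1 + k ∈ Δ := by
  rw [mem_dec, Nat.add_right_comm]

private lemma northStep_dec {N : ℕ} {Δ : Set ℕ} {i : ℕ} :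
    NorthStep N (dec Δ) i ↔ NorthStep N Δ (i + 1) := by
  unfold NorthStep
  rw [mem_dec, mem_dec_add]

private lemma eastStep_dec {M : ℕ} {Δ : Set ℕ} {i : ℕ} :
    EastStep M (dec Δ) i ↔ EastStep M Δ (i + 1) := by
  unfold EastStep
  rw [mem_dec, mem_dec_add]

private lemma fits_one_facts {M N : ℕ} {Δ : Set ℕ} {v w : List Symb}
    (h : Fits M N Δ (Symb.one :: v) (Symb.one :: w)) :
    0 ∉ Δ ∧ N ∈ Δ ∧ M ∈ Δ := by
  obtain ⟨hv, hw, h1, h2⟩ := h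
  have hn : NorthStep N Δ 0 := ((h1 0 (by simp)).2.1).mp rfl
  have he : EastStep M Δ 0 := ((h2 0 (by simp)).2.1).mp rfl
  exact ⟨hn.1, by simpa using hn.2, by simpa using he.2⟩

private lemma invariant_dec {M N : ℕ} {Δ : Set ℕ} (h : Invariant M N Δ) :
    Invariant M N (dec Δ) := by
  obtain ⟨hfin, hcl⟩ := h
  constructor
  · have : {n : ℕ | n ∉ dec Δ} = (· + 1) ⁻¹' {n : ℕ | n ∉ Δ} := rfl
    rw [this]
    exact Set.Finite.preimage (Set.injOn_of_injective (fun a b hab => by omega)) hfin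
  · intro i hi
    have := hcl (i + 1) hi
    exact ⟨mem_dec_add.mpr this.1, mem_dec_add.mpr this.2⟩

private lemma fits_dec {M N : ℕ} {Δ : Set ℕ} {v w : List Symb}
    (hv : v.length + 1 = M) (hw : w.length + 1 = N)
    (h : Fits M N Δ (Symb.one :: v) (Symb.one :: w)) :
    Fits M N (dec Δ) (v ++ [Symb.bullet]) (w ++ [Symb.bullet]) := by
  obtain ⟨h0, hNΔ, hMΔ⟩ := fits_one_facts h
  obtain ⟨_, _, h1, h2⟩ := h
  refine ⟨by simpa using hv, by simpa using hw, ?_, ?_⟩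
  · intro i hi
    have hi' : i < v.length + 1 := by simpa using hi
    rcases Nat.lt_or_ge i v.length with hlt | hge
    · have hg : (v ++ [Symb.bullet]).get ⟨i, hi⟩ = v.get ⟨i, hlt⟩ := by
        simp [List.get_eq_getElem, List.getElem_append_left, hlt]
      have hthis := h1 (i + 1) (by simpa using Nat.succ_lt_succ hlt)
      have hgv : (Symb.one :: v).get ⟨i + 1, by simpa using Nat.succ_lt_succ hlt⟩
          = v.get ⟨i, hlt⟩ := rfl
      rw [hgv] at hthis
      rw [hg]
      refine ⟨hthis.1, ?_, ?_⟩
      · rw [northStep_dec]; exact hthis.2.1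
      · rw [show (i ∉ dec Δ ∧ i + N ∉ dec Δ) ↔ (i + 1 ∉ Δ ∧ i + 1 + N ∉ Δ) by
          rw [mem_dec, mem_dec_add]]
        exact hthis.2.2
    · have heq : i = v.length := by omega
      subst heq
      have hg : (v ++ [Symb.bullet]).get ⟨v.length, hi⟩ = Symb.bullet := by
        simp [List.get_eq_getElem]
      have hmem : v.length ∈ dec Δ := by rw [mem_dec, hv]; exact hMΔ
      rw [hg]
      refine ⟨by simp [hmem], ?_, ?_⟩
      · constructor
        · intro hc; exact absurd hc (by simp)
        · intro hc; exact absurd hmem hc.1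
      · constructor
        · intro hc; exact absurd hc (by simp)
        · intro hc; exact absurd hmem hc.1
  · intro i hi
    have hi' : i < w.length + 1 := by simpa using hi
    rcases Nat.lt_or_ge i w.length with hlt | hge
    · have hg : (w ++ [Symb.bullet]).get ⟨i, hi⟩ = w.get ⟨i, hlt⟩ := by
        simp [List.get_eq_getElem, List.getElem_append_left, hlt]
      have hthis := h2 (i + 1) (by simpa using Nat.succ_lt_succ hlt)
      have hgw : (Symb.one :: w).get ⟨i + 1, by simpa using Nat.succ_lt_succ hlt⟩
          = w.get ⟨i, hlt⟩ := rfl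
      rw [hgw] at hthis
      rw [hg]
      refine ⟨hthis.1, ?_, ?_⟩
      · rw [eastStep_dec]; exact hthis.2.1
      · rw [show (i ∉ dec Δ ∧ i + M ∉ dec Δ) ↔ (i + 1 ∉ Δ ∧ i + 1 + M ∉ Δ) by
          rw [mem_dec, mem_dec_add]]
        exact hthis.2.2
    · have heq : i = w.length := by omega
      subst heq
      have hg : (w ++ [Symb.bullet]).get ⟨w.length, hi⟩ = Symb.bullet := by
        simp [List.get_eq_getElem]
      have hmem : w.length ∈ dec Δ := by rw [mem_dec, hw]; exact hNΔ
      rw [hg]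
      refine ⟨by simp [hmem], ?_, ?_⟩
      · constructor
        · intro hc; exact absurd hc (by simp)
        · intro hc; exact absurd hmem hc.1
      · constructor
        · intro hc; exact absurd hc (by simp)
        · intro hc; exact absurd hmem hc.1
/-- Increment: the inverse of `dec` on sets not containing `0`. -/
private def inc (Γ : Set ℕ) : Set ℕ := {n : ℕ | 0 < n ∧ n - 1 ∈ Γ}

private lemma mem_inc_succ {Γ : Set ℕ} {m : ℕ} : m + 1 ∈ inc Γ ↔ m ∈ Γ := by
  simp [inc]

private lemma zero_not_mem_inc {Γ : Set ℕ} : 0 ∉ inc Γ := by simp [inc]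

private lemma dec_inc (Γ : Set ℕ) : dec (inc Γ) = Γ := by
  ext i; exact mem_inc_succ

private lemma invariant_inc {M N : ℕ} {Γ : Set ℕ} (h : Invariant M N Γ) :
    Invariant M N (inc Γ) := by
  obtain ⟨hfin, hcl⟩ := h
  constructor
  · apply Set.Finite.subset (Set.Finite.insert 0 (Set.Finite.image (· + 1) hfin))
    intro n hn
    simp only [inc, Set.mem_setOf_eq, not_and_or, not_lt, Nat.le_zero] at hn
    rcases hn with h0 | h1
    · exact Or.inl h0
    · rcases Nat.eq_zero_or_pos n with h0 | hpos
      · exact Or.inl h0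
      · exact Or.inr ⟨n - 1, h1, by simp; omega⟩
  · rintro i ⟨hpos, hmem⟩
    have := hcl (i - 1) hmem
    exact ⟨⟨by omega, by rw [show i + M - 1 = i - 1 + M by omega]; exact this.1⟩,
           ⟨by omega, by rw [show i + N - 1 = i - 1 + N by omega]; exact this.2⟩⟩

private lemma fits_bullet_facts {M N : ℕ} {Γ : Set ℕ} {v w : List Symb}
    (hv : v.length + 1 = M) (hw : w.length + 1 = N)
    (h : Fits M N Γ (v ++ [Symb.bullet]) (w ++ [Symb.bullet])) :
    v.length ∈ Γ ∧ w.length ∈ Γ := by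
  obtain ⟨_, _, h1, h2⟩ := h
  have hb1 := (h1 v.length (by simp)).1
  have hb2 := (h2 w.length (by simp)).1
  constructor
  · exact hb1.mp (by simp [List.get_eq_getElem])
  · exact hb2.mp (by simp [List.get_eq_getElem])

private lemma fits_inc {M N : ℕ} {Γ : Set ℕ} {v w : List Symb}
    (hv : v.length + 1 = M) (hw : w.length + 1 = N)
    (h : Fits M N Γ (v ++ [Symb.bullet]) (w ++ [Symb.bullet])) :
    Fits M N (inc Γ) (Symb.one :: v) (Symb.one :: w) := by
  obtain ⟨hvl, hwl⟩ := fits_bullet_facts hv hw h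
  have hNmem : N ∈ inc Γ := by rw [← hw, mem_inc_succ]; exact hwl
  have hMmem : M ∈ inc Γ := by rw [← hv, mem_inc_succ]; exact hvl
  obtain ⟨_, _, h1, h2⟩ := h
  refine ⟨by simpa using hv, by simpa using hw, ?_, ?_⟩
  · intro i hi
    match i, hi with
    | 0, hi =>
      have hg : (Symb.one :: v).get ⟨0, hi⟩ = Symb.one := rfl
      rw [hg]
      refine ⟨by simp [zero_not_mem_inc], ?_, ?_⟩
      · simp only [true_iff]
        exact ⟨zero_not_mem_inc, by simpa using hNmem⟩
      · constructor
        · intro hc; exact absurd hc (by simp)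
        · intro hc; exact absurd (by simpa using hNmem) hc.2
    | (j + 1), hi =>
      have hj : j < v.length := by simpa using hi
      have hj' : j < (v ++ [Symb.bullet]).length := by simp; omega
      have hthis := h1 j hj'
      have hg2 : (v ++ [Symb.bullet]).get ⟨j, hj'⟩ = v.get ⟨j, hj⟩ := by
        simp [List.get_eq_getElem, List.getElem_append_left, hj]
      rw [hg2] at hthis
      have hg : (Symb.one :: v).get ⟨j + 1, hi⟩ = v.get ⟨j, hj⟩ := rfl
      rw [hg]
      refine ⟨by rw [mem_inc_succ]; exact hthis.1, ?_, ?_⟩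
      · rw [show NorthStep N (inc Γ) (j + 1) ↔ NorthStep N Γ j by
          unfold NorthStep
          rw [mem_inc_succ, Nat.add_right_comm, mem_inc_succ]]
        exact hthis.2.1
      · rw [show (j + 1 ∉ inc Γ ∧ j + 1 + N ∉ inc Γ) ↔ (j ∉ Γ ∧ j + N ∉ Γ) by
          rw [mem_inc_succ, Nat.add_right_comm, mem_inc_succ]]
        exact hthis.2.2
  · intro i hi
    match i, hi with
    | 0, hi =>
      have hg : (Symb.one :: w).get ⟨0, hi⟩ = Symb.one := rfl
      rw [hg]
      refine ⟨by simp [zero_not_mem_inc], ?_, ?_⟩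
      · simp only [true_iff]
        exact ⟨zero_not_mem_inc, by simpa using hMmem⟩
      · constructor
        · intro hc; exact absurd hc (by simp)
        · intro hc; exact absurd (by simpa using hMmem) hc.2
    | (j + 1), hi =>
      have hj : j < w.length := by simpa using hi
      have hj' : j < (w ++ [Symb.bullet]).length := by simp; omega
      have hthis := h2 j hj'
      have hg2 : (w ++ [Symb.bullet]).get ⟨j, hj'⟩ = w.get ⟨j, hj⟩ := by
        simp [List.get_eq_getElem, List.getElem_append_left, hj]
      rw [hg2] at hthis
      have hg : (Symb.one :: w).get ⟨j + 1, hi⟩ = w.get ⟨j, hj⟩ := rfl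
      rw [hg]
      refine ⟨by rw [mem_inc_succ]; exact hthis.1, ?_, ?_⟩
      · rw [show EastStep M (inc Γ) (j + 1) ↔ EastStep M Γ j by
          unfold EastStep
          rw [mem_inc_succ, Nat.add_right_comm, mem_inc_succ]]
        exact hthis.2.1
      · rw [show (j + 1 ∉ inc Γ ∧ j + 1 + M ∉ inc Γ) ↔ (j ∉ Γ ∧ j + M ∉ Γ) by
          rw [mem_inc_succ, Nat.add_right_comm, mem_inc_succ]]
        exact hthis.2.2
private lemma area_dec_eq {M N : ℕ} {Δ : Set ℕ} (hMN : M + N ∈ Δ) :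
    area M N (dec Δ) = area M N Δ := by
  unfold area
  have himg : (· + 1) '' {c : ℕ | M + N ≤ c ∧ c ∉ dec Δ} = {c : ℕ | M + N ≤ c ∧ c ∉ Δ} := by
    ext d
    simp only [Set.mem_image, Set.mem_setOf_eq, mem_dec]
    constructor
    · rintro ⟨c, ⟨hc1, hc2⟩, rfl⟩
      exact ⟨by omega, hc2⟩
    · rintro ⟨hd1, hd2⟩
      have hne : d ≠ M + N := fun hc => hd2 (hc ▸ hMN)
      exact ⟨d - 1, ⟨by omega, by rw [show d - 1 + 1 = d by omega]; exact hd2⟩, by omega⟩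
  rw [← himg, Set.ncard_image_of_injective _ (fun a b hab => by omega)]

private lemma pdinv_dec_eq {M N : ℕ} {Δ : Set ℕ} (hM : M ∈ Δ) (h0 : 0 ∉ Δ) :
    pdinv M N (dec Δ) = pdinv M N Δ := by
  unfold pdinv
  set f : ℕ × ℕ → ℕ × ℕ := fun p => (p.1 + 1, p.2 + 1) with hf
  have hinj : Function.Injective f := by
    rintro ⟨a, b⟩ ⟨c, d⟩ hab
    simp only [hf, Prod.mk.injEq] at hab
    exact Prod.ext (by omega) (by omega)
  have himg : f '' {p : ℕ × ℕ | p.1 < p.2 ∧ M ≤ p.2 ∧ p.2 < p.1 + M ∧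
        NorthStep N (dec Δ) p.1 ∧ p.2 ∉ dec Δ}
      = {p : ℕ × ℕ | p.1 < p.2 ∧ M ≤ p.2 ∧ p.2 < p.1 + M ∧ NorthStep N Δ p.1 ∧ p.2 ∉ Δ} := by
    ext ⟨c, d⟩
    simp only [Set.mem_image, Set.mem_setOf_eq, hf, Prod.mk.injEq, Prod.exists]
    constructor
    · rintro ⟨a, b, ⟨h1, h2, h3, h4, h5⟩, rfl, rfl⟩
      refine ⟨by omega, by omega, by omega, ?_, h5⟩
      rw [northStep_dec] at h4
      exact h4
    · rintro ⟨h1, h2, h3, h4, h5⟩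
      have hc0 : 0 < c := by
        rcases Nat.eq_zero_or_pos c with rfl | h
        · omega
        · exact h
      have hdM : M < d := by
        rcases Nat.lt_or_ge M d with h | h
        · exact h
        · exfalso; exact h5 (by rwa [show d = M by omega])
      refine ⟨c - 1, d - 1, ⟨by omega, by omega, by omega, ?_, ?_⟩, by omega, by omega⟩
      · rw [northStep_dec, show c - 1 + 1 = c by omega]
        exact h4
      · rw [mem_dec, show d - 1 + 1 = d by omega]
        exact h5
  rw [← himg, Set.ncard_image_of_injective _ hinj]

/-- For words `v`, `w` of lengths `M−1`, `N−1`, decrementing is a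
bijection from the `M,N`-invariant sets fitting `(1v, 1w)` onto those fitting
`(v•, w•)`; moreover, for `Δ` fitting `(1v, 1w)`, `area (dec Δ) = area Δ` and
`pdinv (dec Δ) = pdinv Δ`. -/
theorem dec_bijection_one_one (M N : ℕ) (hM : 0 < M) (hN : 0 < N)
    (v w : List Symb) (hv : v.length + 1 = M) (hw : w.length + 1 = N) :
    Set.BijOn dec
      {Δ : Set ℕ | Invariant M N Δ ∧ Fits M N Δ (Symb.one :: v) (Symb.one :: w)}
      {Δ : Set ℕ | Invariant M N Δ ∧ Fits M N Δ (v ++ [Symb.bullet]) (w ++ [Symb.bullet])} ∧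
    ∀ Δ : Set ℕ, Invariant M N Δ → Fits M N Δ (Symb.one :: v) (Symb.one :: w) →
      area M N (dec Δ) = area M N Δ ∧ pdinv M N (dec Δ) = pdinv M N Δ := by
  constructor
  · refine ⟨?_, ?_, ?_⟩
    · rintro Δ ⟨hinv, hfits⟩
      exact ⟨invariant_dec hinv, fits_dec hv hw hfits⟩
    · rintro Δ₁ ⟨hinv₁, hfits₁⟩ Δ₂ ⟨hinv₂, hfits₂⟩ heq
      have h01 := (fits_one_facts hfits₁).1
      have h02 := (fits_one_facts hfits₂).1
      ext n
      match n with
      | 0 => simp [h01, h02]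
      | (m + 1) =>
        have : (m ∈ dec Δ₁) = (m ∈ dec Δ₂) := by rw [heq]
        simpa [mem_dec] using this
    · rintro Γ ⟨hinv, hfits⟩
      exact ⟨inc Γ, ⟨invariant_inc hinv, fits_inc hv hw hfits⟩, dec_inc Γ⟩
  · intro Δ hinv hfits
    obtain ⟨h0, hNΔ, hMΔ⟩ := fits_one_facts hfits
    have hMN : M + N ∈ Δ := by rw [Nat.add_comm]; exact (hinv.2 N hNΔ).1
    exact ⟨area_dec_eq hMN, pdinv_dec_eq hMΔ h0⟩
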